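/- The dichromatic number of the tournament T_k on the (2k−1)×(2k−1) checkerboard is exactly k: the vertices can be partitioned into k acyclic-inducing classes, and no such partition into fewer than k classes exists. -/
import Mathlib


/-- Lexicographic order on cells of the checkerboard. -/
def clt (p q : ℕ × ℕ) : Prop := p.1 < q.1 ∨ (p.1 = q.1 ∧ p.2 < q.2)

/-- The n × m checkerboard: cells (i,j) with 1 ≤ i ≤ n, 1 ≤ j ≤ m. -/
def board (n m : ℕ) : Finset (ℕ × ℕ) := Finset.Icc 1 n ×ˢ Finset.Icc 1 m

/-- A set of cells is c-sparse if no cell of the set in a different column lies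
strictly (lexicographically) between two cells of the set in the same column. -/
def CSparse (S : Finset (ℕ × ℕ)) : Prop :=
  ∀ a₁ a₂ b x y, (a₁, b) ∈ S → (a₂, b) ∈ S → (x, y) ∈ S → y ≠ b →
    clt (a₁, b) (x, y) → clt (x, y) (a₂, b) → False

/-- The orientation of the edges of the tournament built on the checkerboard:
within a column the edge goes from the lexicographically smaller cell to the larger,
between different columns from the larger to the smaller. -/
def tedge (p q : ℕ × ℕ) : Prop :=
  (p.2 = q.2 ∧ clt p q) ∨ (p.2 ≠ q.2 ∧ clt q p)

/-- The induced subdigraph on `V` has no directed cycle. -/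
def AcyclicOn (V : Finset (ℕ × ℕ)) : Prop :=
  ¬ ∃ (k : ℕ) (_ : 3 ≤ k) (f : ZMod k → ℕ × ℕ),
      Function.Injective f ∧ (∀ i, f i ∈ V) ∧ ∀ i : ZMod k, tedge (f i) (f (i + 1))

lemma tedge_irrefl (p : ℕ × ℕ) : ¬ tedge p p := by
  rintro (⟨_, hc⟩ | ⟨hne, _⟩)
  · simp only [clt] at hc; omega
  · exact hne rfl

lemma tedge_asymm {p q : ℕ × ℕ} (h1 : tedge p q) (h2 : tedge q p) : False := by
  rcases h1 with ⟨e1, c1⟩ | ⟨e1, c1⟩ <;> rcases h2 with ⟨e2, c2⟩ | ⟨e2, c2⟩ <;>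
    simp only [clt] at c1 c2 <;> first | omega | (exact e1 e2.symm) | (exact e2 e1.symm)

lemma tedge_total {p q : ℕ × ℕ} (hne : p ≠ q) : tedge p q ∨ tedge q p := by
  have hne' : ¬ (p.1 = q.1 ∧ p.2 = q.2) := by
    intro h; exact hne (Prod.ext h.1 h.2)
  by_cases hc : p.2 = q.2
  · have : clt p q ∨ clt q p := by simp only [clt]; omega
    rcases this with h | h
    · exact Or.inl (Or.inl ⟨hc, h⟩)
    · exact Or.inr (Or.inl ⟨hc.symm, h⟩)
  · have : clt p q ∨ clt q p := by simp only [clt]; omega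
    rcases this with h | h
    · exact Or.inr (Or.inr ⟨fun e => hc e.symm, h⟩)
    · exact Or.inl (Or.inr ⟨hc, h⟩)

lemma no3 {S : Finset (ℕ × ℕ)} (h : CSparse S) {p q r : ℕ × ℕ}
    (hp : p ∈ S) (hq : q ∈ S) (hr : r ∈ S)
    (h1 : tedge p q) (h2 : tedge q r) (h3 : tedge r p) : False := by
  obtain ⟨p1, p2⟩ := p; obtain ⟨q1, q2⟩ := q; obtain ⟨r1, r2⟩ := r
  rcases h1 with ⟨e1, c1⟩ | ⟨e1, c1⟩ <;> rcases h2 with ⟨e2, c2⟩ | ⟨e2, c2⟩ <;>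
      rcases h3 with ⟨e3, c3⟩ | ⟨e3, c3⟩ <;> simp only at e1 e2 e3 c1 c2 c3
  · simp only [clt] at c1 c2 c3; omega
  · omega
  · omega
  · -- p2 = q2, q2 ≠ r2, r2 ≠ p2 : clt p q, clt r q, clt p r
    exact h p1 q1 p2 r1 r2 hp (by rw [e1]; exact hq) hr e3 c3 (by rw [e1]; exact c2)
  · omega
  · -- p2 ≠ q2, q2 = r2, r2 ≠ p2 : clt q p, clt q r, clt p r
    exact h q1 r1 q2 p1 p2 hq (by rw [e2]; exact hr) hp e1 c1 (by rw [e2]; exact c3)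
  · -- p2 ≠ q2, q2 ≠ r2, r2 = p2 : clt q p, clt r q, clt r p
    exact h r1 p1 p2 q1 q2 (by rw [← e3]; exact hr) hp hq (fun e => e1 e.symm)
      (by rw [← e3]; exact c2) c1
  · simp only [clt] at c1 c2 c3; omega

lemma acyclicOn_of_csparse {S : Finset (ℕ × ℕ)} (h : CSparse S) : AcyclicOn S := by
  rintro ⟨m, hm, f, hinj, hmem, hcyc⟩
  have trans : ∀ p q r : ℕ × ℕ, p ∈ S → q ∈ S → r ∈ S →
      tedge p q → tedge q r → tedge p r := by
    intro p q r hp hq hr h1 h2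
    have hpr : p ≠ r := by rintro rfl; exact tedge_asymm h1 h2
    rcases tedge_total hpr with h3 | h3
    · exact h3
    · exact absurd (no3 h hp hq hr h1 h2 h3) (by simp)
  have chain : ∀ i : ℕ, tedge (f 0) (f ((i + 1 : ℕ) : ZMod m)) := by
    intro i
    induction i with
    | zero => simpa using hcyc 0
    | succ j ih =>
        have hstep := hcyc ((j + 1 : ℕ) : ZMod m)
        have e : ((j + 1 + 1 : ℕ) : ZMod m) = ((j + 1 : ℕ) : ZMod m) + 1 := by push_cast; ring
        rw [e]
        exact trans _ _ _ (hmem _) (hmem _) (hmem _) ih hstep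
  have hfin := chain (m - 1)
  rw [show m - 1 + 1 = m by omega, ZMod.natCast_self] at hfin
  exact tedge_irrefl _ hfin

lemma csparse_of_acyclicOn {S : Finset (ℕ × ℕ)} (h : AcyclicOn S) : CSparse S := by
  intro a1 a2 b x y h1 h2 h3 hy hc1 hc2
  have ha : a1 < a2 := by simp only [clt] at hc1 hc2; omega
  apply h
  have e10 : (1 : ZMod 3) ≠ 0 := by decide
  have e20 : (2 : ZMod 3) ≠ 0 := by decide
  have e21 : (2 : ZMod 3) ≠ 1 := by decide
  refine ⟨3, le_refl 3, fun i => if i = 0 then (a1, b) else if i = 1 then (a2, b) else (x, y),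
    ?_, ?_, ?_⟩
  · have hall : ∀ i : ZMod 3, i = 0 ∨ i = 1 ∨ i = 2 := by decide
    intro i j hij
    rcases hall i with rfl | rfl | rfl <;> rcases hall j with rfl | rfl | rfl <;>
      simp only [e10, e20, e21, if_pos, if_neg, if_true, reduceIte] at hij <;>
      first
        | rfl
        | (exfalso; simp only [Prod.mk.injEq] at hij; omega)
        | (exfalso; exact hy (by simp only [Prod.mk.injEq] at hij; omega))
  · intro i
    dsimp only
    split_ifs <;> assumption
  · have hall : ∀ i : ZMod 3, i = 0 ∨ i = 1 ∨ i = 2 := by decide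
    intro i
    rcases hall i with rfl | rfl | rfl
    · have : (0 : ZMod 3) + 1 = 1 := by decide
      rw [this]
      simp only [e10, if_pos, if_neg, reduceIte]
      exact Or.inl ⟨rfl, Or.inl ha⟩
    · have : (1 : ZMod 3) + 1 = 2 := by decide
      rw [this]
      simp only [e10, e20, e21, if_pos, if_neg, reduceIte]
      exact Or.inr ⟨fun e => hy (by simpa using e.symm), hc2⟩
    · have : (2 : ZMod 3) + 1 = 0 := by decide
      rw [this]
      simp only [e10, e20, e21, if_pos, if_neg, reduceIte]
      exact Or.inr ⟨hy, hc1⟩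

lemma mem_board {n m : ℕ} {p : ℕ × ℕ} :
    p ∈ board n m ↔ 1 ≤ p.1 ∧ p.1 ≤ n ∧ 1 ≤ p.2 ∧ p.2 ≤ m := by
  simp [board, Finset.mem_product, Finset.mem_Icc, and_assoc]

lemma csparse_card_le {n : ℕ} {S : Finset (ℕ × ℕ)} (hS : S ⊆ board n n)
    (h : CSparse S) : S.card ≤ 2 * n - 1 := by
  classical
  set g : ℕ × ℕ → ℕ ⊕ ℕ :=
    fun p => if ∃ a, a < p.1 ∧ (a, p.2) ∈ S then Sum.inr p.1 else Sum.inl p.2 with hg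
  have hmaps : ∀ p ∈ S, g p ∈
      ((Finset.Icc 1 n).map ⟨Sum.inl, Sum.inl_injective⟩ ∪
       (Finset.Icc 2 n).map ⟨Sum.inr, Sum.inr_injective⟩) := by
    intro p hp
    have hb := mem_board.mp (hS hp)
    rw [Finset.mem_union]
    simp only [hg]
    split_ifs with hcond
    · right
      obtain ⟨a, ha, haS⟩ := hcond
      have hba := mem_board.mp (hS haS)
      simp only [Finset.mem_map, Finset.mem_Icc, Function.Embedding.coeFn_mk]
      exact ⟨p.1, ⟨by omega, hb.2.1⟩, rfl⟩
    · left
      simp only [Finset.mem_map, Finset.mem_Icc, Function.Embedding.coeFn_mk]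
      exact ⟨p.2, ⟨hb.2.2.1, hb.2.2.2⟩, rfl⟩
  have hinj : Set.InjOn g S := by
    intro p hp q hq heq
    simp only [hg] at heq
    by_cases hcp : ∃ a, a < p.1 ∧ (a, p.2) ∈ S <;>
      by_cases hcq : ∃ a, a < q.1 ∧ (a, q.2) ∈ S
    · -- both inr
      rw [if_pos hcp, if_pos hcq] at heq
      have h11 : p.1 = q.1 := by simpa using heq
      obtain ⟨a, ha, haS⟩ := hcp
      obtain ⟨a', ha', ha'S⟩ := hcq
      have h22 : p.2 = q.2 := by
        rcases Nat.lt_trichotomy p.2 q.2 with hlt | he | hgt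
        · exact absurd (h a' q.1 q.2 p.1 p.2 ha'S (by simpa using hq) (by simpa using hp)
            (by omega) (Or.inl (by omega)) (Or.inr ⟨by omega, hlt⟩)) (by simp)
        · exact he
        · exact absurd (h a p.1 p.2 q.1 q.2 haS (by simpa using hp) (by simpa using hq)
            (by omega) (Or.inl (by omega)) (Or.inr ⟨by omega, hgt⟩)) (by simp)
      exact Prod.ext h11 h22
    · rw [if_pos hcp, if_neg hcq] at heq
      exact absurd heq (by simp)
    · rw [if_neg hcp, if_pos hcq] at heq
      exact absurd heq (by simp)
    · -- both inl
      rw [if_neg hcp, if_neg hcq] at heq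
      have h22 : p.2 = q.2 := by simpa using heq
      have h11 : p.1 = q.1 := by
        rcases Nat.lt_trichotomy p.1 q.1 with hlt | he | hgt
        · exact absurd ⟨p.1, hlt, by rw [← h22]; simpa using hp⟩ hcq
        · exact he
        · exact absurd ⟨q.1, hgt, by rw [h22]; simpa using hq⟩ hcp
      exact Prod.ext h11 h22
  calc S.card ≤ _ := Finset.card_le_card_of_injOn g hmaps hinj
    _ ≤ ((Finset.Icc 1 n).map ⟨Sum.inl, Sum.inl_injective⟩).card +
        ((Finset.Icc 2 n).map ⟨Sum.inr, Sum.inr_injective⟩).card := Finset.card_union_le _ _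
    _ ≤ 2 * n - 1 := by
        simp only [Finset.card_map, Nat.card_Icc]
        omega

-- the partition classes
def cls (k t : ℕ) : Finset (ℕ × ℕ) :=
  (board (2 * k - 1) (2 * k - 1)).filter (fun p => (p.1 + 2 * k - p.2) % (2 * k) / 2 = t)

lemma mod2k {k i j : ℕ} (hk : 1 ≤ k) (h1 : 1 ≤ i) (h2 : i ≤ 2 * k - 1)
    (h3 : 1 ≤ j) (h4 : j ≤ 2 * k - 1) :
    (i + 2 * k - j) % (2 * k) = if j ≤ i then i - j else i + 2 * k - j := by
  split_ifs with hij
  · rw [show i + 2 * k - j = (i - j) + 2 * k by omega, Nat.add_mod_right]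
    exact Nat.mod_eq_of_lt (by omega)
  · exact Nat.mod_eq_of_lt (by omega)

lemma mem_cls {k t : ℕ} {p : ℕ × ℕ} :
    p ∈ cls k t ↔ (1 ≤ p.1 ∧ p.1 ≤ 2 * k - 1 ∧ 1 ≤ p.2 ∧ p.2 ≤ 2 * k - 1) ∧
      (p.1 + 2 * k - p.2) % (2 * k) / 2 = t := by
  rw [cls, Finset.mem_filter, mem_board]

lemma csparse_cls {k t : ℕ} (hk : 1 ≤ k) : CSparse (cls k t) := by
  intro a1 a2 b x y h1 h2 h3 hy hc1 hc2
  rw [mem_cls] at h1 h2 h3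
  obtain ⟨⟨b1a, b1b, b1c, b1d⟩, hr1⟩ := h1
  obtain ⟨⟨b2a, b2b, b2c, b2d⟩, hr2⟩ := h2
  obtain ⟨⟨b3a, b3b, b3c, b3d⟩, hr3⟩ := h3
  simp only at b1a b1b b1c b1d b2a b2b b2c b2d b3a b3b b3c b3d hr1 hr2 hr3
  rw [mod2k hk b1a b1b b1c b1d] at hr1
  rw [mod2k hk b2a b2b b2c b2d] at hr2
  rw [mod2k hk b3a b3b b3c b3d] at hr3
  simp only [clt] at hc1 hc2
  split_ifs at hr1 hr2 hr3 <;> omega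

lemma witness_mem_cls {k t : ℕ} (hk : 1 ≤ k) (ht : t < k) : (2 * t + 1, 1) ∈ cls k t := by
  rw [mem_cls]
  refine ⟨⟨by omega, by omega, by omega, by omega⟩, ?_⟩
  have e : 2 * t + 1 + 2 * k - 1 = 2 * t + 2 * k := by omega
  simp only [e, Nat.add_mod_right]
  rw [Nat.mod_eq_of_lt (by omega)]
  omega

theorem dichromatic_number_Tk (k : ℕ) (hk : 1 ≤ k) :
    IsLeast {c : ℕ | ∃ Q : Finset (Finset (ℕ × ℕ)),
      (∀ S ∈ Q, S.Nonempty ∧ AcyclicOn S) ∧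
      (∀ S ∈ Q, ∀ T ∈ Q, S ≠ T → Disjoint S T) ∧
      Q.biUnion id = board (2 * k - 1) (2 * k - 1) ∧ Q.card = c} k := by
  constructor
  · -- membership : the partition into k classes exists
    refine ⟨(Finset.range k).image (cls k), ?_, ?_, ?_, ?_⟩
    · intro S hS
      obtain ⟨t, ht, rfl⟩ := Finset.mem_image.mp hS
      rw [Finset.mem_range] at ht
      exact ⟨⟨(2 * t + 1, 1), witness_mem_cls hk ht⟩, acyclicOn_of_csparse (csparse_cls hk)⟩
    · intro S hS T hT hne
      obtain ⟨t, ht, rfl⟩ := Finset.mem_image.mp hS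
      obtain ⟨s, hs, rfl⟩ := Finset.mem_image.mp hT
      rw [Finset.disjoint_left]
      intro p hpt hps
      have e1 := (mem_cls.mp hpt).2
      have e2 := (mem_cls.mp hps).2
      exact hne (by rw [← e1, e2])
    · ext p
      simp only [Finset.mem_biUnion, Finset.mem_image, id_eq]
      constructor
      · rintro ⟨S, ⟨t, ht, rfl⟩, hp⟩
        exact (mem_board.mpr (mem_cls.mp hp).1)
      · intro hp
        have hb := mem_board.mp hp
        have hlt : (p.1 + 2 * k - p.2) % (2 * k) < 2 * k := Nat.mod_lt _ (by omega)
        refine ⟨cls k ((p.1 + 2 * k - p.2) % (2 * k) / 2), ⟨_, ?_, rfl⟩, ?_⟩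
        · rw [Finset.mem_range]; omega
        · exact mem_cls.mpr ⟨hb, rfl⟩
    · rw [Finset.card_image_of_injOn, Finset.card_range]
      intro t ht s hs he
      rw [Finset.mem_coe, Finset.mem_range] at ht hs
      have := witness_mem_cls hk ht
      rw [he, mem_cls] at this
      have e := this.2
      have e' := (mem_cls.mp (witness_mem_cls hk ht)).2
      omega
  · -- lower bound
    rintro c ⟨Q, h1, h2, h3, rfl⟩
    have hcardb : (board (2 * k - 1) (2 * k - 1)).card = (2 * k - 1) * (2 * k - 1) := by
      simp [board, Nat.card_Icc]
    have hsum : ∑ S ∈ Q, S.card = (2 * k - 1) * (2 * k - 1) := by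
      rw [← hcardb, ← h3]
      exact (Finset.card_biUnion (fun S hS T hT hne => h2 S hS T hT hne)).symm
    have hb : ∀ S ∈ Q, S.card ≤ 2 * (2 * k - 1) - 1 := by
      intro S hS
      have hsub : S ⊆ board (2 * k - 1) (2 * k - 1) := by
        rw [← h3]; exact Finset.subset_biUnion_of_mem id hS
      exact csparse_card_le hsub (csparse_of_acyclicOn (h1 S hS).2)
    have htot : (2 * k - 1) * (2 * k - 1) ≤ Q.card * (2 * (2 * k - 1) - 1) := by
      rw [← hsum]
      calc ∑ S ∈ Q, S.card ≤ ∑ _S ∈ Q, (2 * (2 * k - 1) - 1) := Finset.sum_le_sum hb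
        _ = Q.card * (2 * (2 * k - 1) - 1) := by rw [Finset.sum_const, smul_eq_mul]
    by_contra hlt
    push_neg at hlt
    obtain ⟨m, rfl⟩ : ∃ m, k = m + 1 := ⟨k - 1, by omega⟩
    have h4 : Q.card * (2 * (2 * (m + 1) - 1) - 1) ≤ m * (2 * (2 * (m + 1) - 1) - 1) :=
      Nat.mul_le_mul_right _ (by omega)
    have h5 : (2 * (m + 1) - 1) * (2 * (m + 1) - 1) ≤ m * (2 * (2 * (m + 1) - 1) - 1) :=
      le_trans htot h4
    have e1 : 2 * (m + 1) - 1 = 2 * m + 1 := by omega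
    rw [e1] at h5
    have e2 : 2 * (2 * m + 1) - 1 = 4 * m + 1 := by omega
    rw [e2] at h5
    nlinarith [h5]
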